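/- Let (G_{ij}, p_{ij}, h_{ij}) be a direct sequence of towers of groups in which every G_{ij} is a finitely generated group, and suppose that for each j the first derived limit lim¹_i G_{ij} is trivial, i.e. the action of ∏_i G_{ij} on itself given by (h · g)_i = h_i · g_i · p_{ij}(h_{i+1})⁻¹ is transitive. Set Γ_j = lim_i G_{ij}. Suppose that for every j and every γ ∈ Γ_j there exists k ≥ j such that the composite homomorphism Γ_j → Γ_k sends γ to the identity (i.e., colim_j Γ_j is trivial). Then for each j there exists k > j such that the composite homomorphism Γ_j → Γ_k is trivial (sends every element to the identity). -/
import Mathlib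


/-- The composite homomorphism `G_{i,j} → G_{i,j+k}` of the horizontal maps of a
direct sequence of towers of groups (the identity when `k = 0`). -/
def hIterM (G : ℕ → ℕ → Type*) [∀ i j, Group (G i j)]
    (h : ∀ i j, G i j →* G i (j + 1)) (i j : ℕ) : ∀ k, G i j →* G i (j + k)
  | 0 => MonoidHom.id _
  | k + 1 => (h i (j + k)).comp (hIterM G h i j k)



instance freeGroup_countable (α : Type*) [Countable α] : Countable (FreeGroup α) := by
  unfold FreeGroup
  infer_instance

theorem fg_countable (H : Type*) [Group H] [Group.FG H] : Countable H := by
  obtain ⟨S, hS, hfin⟩ := Group.fg_iff.mp ‹Group.FG H›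
  haveI : Countable S := hfin.countable
  have hsur : Function.Surjective (FreeGroup.lift (fun s : S => (s : H))) := by
    rw [← MonoidHom.range_eq_top, FreeGroup.range_lift_eq_closure]
    rw [Subtype.range_coe_subtype]
    simpa using hS
  exact hsur.countable

section Tower
variable (H : ℕ → Type*) [∀ n, Group (H n)] (π : ∀ n, H (n+1) →* H n)

def QT : ∀ n, H n →* H 0
  | 0 => MonoidHom.id _
  | n+1 => (QT n).comp (π n)

theorem QT_succ (n : ℕ) (x : H (n+1)) : QT H π (n+1) x = QT H π n (π n x) := rfl

theorem QT_range_le {m n : ℕ} (hmn : m ≤ n) : (QT H π n).range ≤ (QT H π m).range := by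
  induction n with
  | zero =>
    have : m = 0 := by omega
    subst this; exact le_rfl
  | succ n ih =>
    rcases Nat.lt_or_ge m (n+1) with hlt | hge
    · refine le_trans ?_ (ih (by omega))
      rintro x ⟨y, rfl⟩
      exact ⟨π n y, rfl⟩
    · have : m = n+1 := by omega
      subst this; exact le_rfl
end Tower

theorem exists_escape {K : Type*} [Group K] {B₁ B₂ : Subgroup K} (hlt : B₂ < B₁) (s t : K) :
    ∃ x, s⁻¹ * x ∈ B₁ ∧ t⁻¹ * x ∉ B₂ := by
  by_cases hc : ∃ x, s⁻¹ * x ∈ B₁ ∧ t⁻¹ * x ∈ B₂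
  · obtain ⟨x₀, hx1, hx2⟩ := hc
    obtain ⟨b, hb1, hb2⟩ := SetLike.exists_of_lt hlt
    refine ⟨x₀ * b, ?_, fun hmem => hb2 ?_⟩
    · rw [← mul_assoc]; exact mul_mem hx1 hb1
    · have := mul_mem (inv_mem hx2) hmem
      simpa [mul_assoc] using this
  · push_neg at hc
    exact ⟨s, by simpa using one_mem B₁, hc s (by simpa using one_mem B₁)⟩

section Gray
variable (H : ℕ → Type*) [∀ n, Group (H n)] (π : ∀ n, H (n+1) →* H n)

theorem exists_drop (N : ℕ) (hk : ∃ k, (QT H π (N+k)).range ≠ (QT H π N).range) :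
    ∃ m, N ≤ m ∧ (QT H π (m+1)).range < (QT H π m).range := by
  obtain ⟨k, hk⟩ := hk
  induction k generalizing N with
  | zero => exact absurd rfl hk
  | succ k ih =>
    by_cases he : (QT H π (N+1)).range = (QT H π N).range
    · obtain ⟨m, hm1, hm2⟩ := ih (N+1) (by
        rw [show N+1+k = N+(k+1) from by omega, he]; exact hk)
      exact ⟨m, by omega, hm2⟩
    · exact ⟨N, le_rfl, lt_of_le_of_ne (QT_range_le H π (Nat.le_succ N)) he⟩

theorem gray [Countable (H 0)]
    (htr : ∀ t : ∀ n, H n, ∃ c : ∀ n, H n, ∀ n, c n * (π n (c (n+1)))⁻¹ = t n) :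
    ∃ N, ∀ k, (QT H π (N+k)).range = (QT H π N).range := by
  by_contra hns
  push_neg at hns
  have drops : ∀ N, ∃ m, N ≤ m ∧ (QT H π (m+1)).range < (QT H π m).range :=
    fun N => exists_drop H π N (hns N)
  classical
  let ν : ℕ → ℕ := fun m => Nat.rec ((drops 1).choose) (fun _ prev => (drops (prev+1)).choose) m
  have hν1 : ∀ m, (QT H π (ν m + 1)).range < (QT H π (ν m)).range := by
    intro m
    cases m with
    | zero => exact (drops 1).choose_spec.2
    | succ m => exact (drops (ν m + 1)).choose_spec.2
  have hνge : ∀ m, 1 ≤ ν m := by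
    intro m
    cases m with
    | zero => exact (drops 1).choose_spec.1
    | succ m =>
      have h1 := (drops (ν m + 1)).choose_spec.1
      have h2 : ν (m+1) = (drops (ν m + 1)).choose := rfl
      omega
  have hνmono : StrictMono ν := by
    apply strictMono_nat_of_lt_succ
    intro m
    have h1 := (drops (ν m + 1)).choose_spec.1
    have h2 : ν (m+1) = (drops (ν m + 1)).choose := rfl
    omega
  obtain ⟨d, hd⟩ := exists_surjective_nat (H 0)
  have hstep : ∀ (n : ℕ) (v : H 0), ∃ x, v⁻¹ * x ∈ (QT H π (n+1)).range ∧
      ∀ m, ν m = n+1 → (d m)⁻¹ * x ∉ (QT H π (n+2)).range := by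
    intro n v
    rcases Classical.em (∃ m, ν m = n+1) with hex | hex
    · obtain ⟨m0, hm0⟩ := hex
      have hlt : (QT H π (n+2)).range < (QT H π (n+1)).range := by
        have := hν1 m0
        rw [hm0] at this
        exact this
      obtain ⟨x, hx1, hx2⟩ := exists_escape hlt v (d m0)
      refine ⟨x, hx1, fun m hm => ?_⟩
      have hmm : m = m0 := hνmono.injective (hm.trans hm0.symm)
      rwa [hmm]
    · refine ⟨v, ⟨1, by simp⟩, fun m hm => absurd (⟨m, hm⟩ : ∃ m, ν m = n+1) hex⟩
  let sfun : ℕ → H 0 := fun n => Nat.rec 1 (fun n prev => (hstep n prev).choose) n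
  have hs1 : ∀ n, (sfun n)⁻¹ * sfun (n+1) ∈ (QT H π (n+1)).range :=
    fun n => (hstep n (sfun n)).choose_spec.1
  have hs2 : ∀ m, (d m)⁻¹ * sfun (ν m) ∉ (QT H π (ν m + 1)).range := by
    intro m
    obtain ⟨n, hn⟩ : ∃ n, ν m = n + 1 := ⟨ν m - 1, by have := hνge m; omega⟩
    rw [hn]
    exact (hstep n (sfun n)).choose_spec.2 m hn
  let w : ∀ n, H n := fun n => Nat.casesOn n 1 (fun n => (MonoidHom.mem_range.mp (hs1 n)).choose)
  have hw : ∀ n, QT H π (n+1) (w (n+1)) = (sfun n)⁻¹ * sfun (n+1) :=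
    fun n => (MonoidHom.mem_range.mp (hs1 n)).choose_spec
  obtain ⟨c, hc⟩ := htr w
  have key : ∀ n, sfun n = c 0 * (QT H π (n+1) (c (n+1)))⁻¹ := by
    intro n
    induction n with
    | zero =>
      have h0 := hc 0
      have hw0 : w 0 = 1 := rfl
      rw [hw0] at h0
      show (1 : H 0) = _
      have hq : QT H π 1 (c 1) = π 0 (c 1) := rfl
      rw [hq, ← h0]
    | succ n ih =>
      have hwn := hw n
      have hcn := hc (n+1)
      have hq : ∀ x, QT H π (n+2) x = QT H π (n+1) (π (n+1) x) := fun _ => rfl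
      calc sfun (n+1) = sfun n * ((sfun n)⁻¹ * sfun (n+1)) := by group
        _ = (c 0 * (QT H π (n+1) (c (n+1)))⁻¹) * QT H π (n+1) (w (n+1)) := by rw [← hwn, ih]
        _ = c 0 * (QT H π (n+2) (c (n+2)))⁻¹ := by
            rw [← hcn, map_mul, map_inv, hq]
            group
  obtain ⟨m, hm⟩ := hd (c 0)
  apply hs2 m
  rw [key (ν m), hm]
  have hsimp : (c 0)⁻¹ * (c 0 * (QT H π (ν m + 1) (c (ν m + 1)))⁻¹)
      = (QT H π (ν m + 1) (c (ν m + 1)))⁻¹ := by group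
  rw [hsimp]
  exact inv_mem ⟨c (ν m + 1), rfl⟩

end Gray

set_option linter.unusedSectionVars false

section Concrete
variable {G : ℕ → ℕ → Type*} [∀ i j, Group (G i j)]

/-- Transport an element of `G m j` along an equality of the first index. -/
def castG {j m n : ℕ} (e : m = n) (x : G m j) : G n j := e ▸ x

theorem castG_id {j m : ℕ} (e : m = m) (x : G m j) : castG e x = x := rfl

theorem castG_trans {j m n r : ℕ} (e1 : m = n) (e2 : n = r) (x : G m j) :
    castG e2 (castG e1 x) = castG (e1.trans e2) x := by subst e1; subst e2; rfl

theorem castG_pi {j : ℕ} (f : ∀ i, G i j) {m n : ℕ} (e : m = n) : castG e (f m) = f n := by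
  subst e; rfl

theorem castG_pi_shift {j i₀ : ℕ} (t : ∀ n, G (i₀ + n) j) {m n : ℕ} (hmn : m = n)
    (e : i₀ + m = i₀ + n) : castG e (t m) = t n := by subst hmn; rfl

theorem castG_pi_shift2 {j i₀ : ℕ} (t : ∀ n, G (i₀ + n) j) {a b c : ℕ} (hab : a = b)
    (e : i₀ + a = c) (e' : i₀ + b = c) : castG e (t a) = castG e' (t b) := by
  subst hab; rfl

variable (p : ∀ i j, G (i + 1) j →* G i j)

theorem castG_p {j m m' : ℕ} (hm : m = m') (e : m + 1 = m' + 1) (z : G (m + 1) j) :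
    p m' j (castG e z) = castG hm (p m j z) := by subst hm; rfl

/-- The composite vertical bonding map `G (i+n) j →* G i j`. -/
noncomputable abbrev Qs (j i : ℕ) : ∀ n, G (i + n) j →* G i j :=
  QT (fun n => G (i + n) j) (fun n => p (i + n) j)

theorem Qs_succ (j i n : ℕ) (z : G (i + (n + 1)) j) :
    Qs p j i (n + 1) z = Qs p j i n (p (i + n) j z) := rfl

theorem Qs_thread {j : ℕ} {g : ∀ i, G i j} (hg : ∀ i, p i j (g (i + 1)) = g i) :
    ∀ i n, Qs p j i n (g (i + n)) = g i := by
  intro i n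
  induction n with
  | zero => rfl
  | succ n ih =>
    rw [Qs_succ]
    have h2 : (p (i + n) j) (g (i + (n + 1))) = g (i + n) := hg (i + n)
    rw [h2, ih]

theorem Qs_cross {j : ℕ} : ∀ (i n : ℕ) (e : i + 1 + n = i + (n + 1)) (z : G (i + 1 + n) j),
    p i j (Qs p j (i + 1) n z) = Qs p j i (n + 1) (castG e z) := by
  intro i n
  induction n with
  | zero => intro e z; rfl
  | succ n ih =>
    intro e z
    have hm : i + 1 + n = i + (n + 1) := by omega
    have h1 : p i j (Qs p j (i+1) (n+1) z) = p i j (Qs p j (i+1) n (p (i+1+n) j z)) := rfl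
    rw [h1, ih hm (p (i+1+n) j z), Qs_succ]
    exact congrArg (Qs p j i (n+1)) (castG_p p hm e z).symm

theorem Qs_congr_arg {j i : ℕ} {a b : ℕ} (hab : a = b) (e : i + a = i + b) (w : G (i + a) j) :
    Qs p j i b (castG e w) = Qs p j i a w := by subst hab; rfl

end Concrete


/-- Theorem A(b): for a direct sequence of towers of finitely generated groups with
vanishing `lim¹` of each vertical tower (expressed as transitivity of the standard
action of `∏_i G_{ij}` on itself), if the colimit of the inverse limits
`Γ_j = lim_i G_{ij}` is trivial, then for each `j` there is `k > j` such that the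
composite homomorphism `Γ_j → Γ_k` is trivial. -/
theorem stmt_2 (G : ℕ → ℕ → Type*) [∀ i j, Group (G i j)] [∀ i j, Group.FG (G i j)]
    (p : ∀ i j, G (i + 1) j →* G i j) (h : ∀ i j, G i j →* G i (j + 1))
    (hcomm : ∀ i j (g : G (i + 1) j), h i j (p i j g) = p i (j + 1) (h (i + 1) j g))
    (hlim1 : ∀ j (g g' : ∀ i, G i j), ∃ c : ∀ i, G i j,
      ∀ i, c i * g i * (p i j (c (i + 1)))⁻¹ = g' i)
    (htriv : ∀ j (g : ∀ i, G i j), (∀ i, p i j (g (i + 1)) = g i) →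
      ∃ k, ∀ i, hIterM G h i j k (g i) = 1) :
    ∀ j, ∃ k, 0 < k ∧ ∀ g : ∀ i, G i j, (∀ i, p i j (g (i + 1)) = g i) →
      ∀ i, hIterM G h i j k (g i) = 1 := by
  classical
  intro j
  -- abbreviations
  set Thr : (∀ i, G i j) → Prop := fun g => ∀ i, p i j (g (i + 1)) = g i with hThrdef
  set K : ℕ → (∀ i, G i j) → Prop := fun k g => ∀ i, hIterM G h i j k (g i) = 1 with hKdef
  -- basic lemmas about K
  have hK1 : ∀ k, K k (fun _ => 1) := fun k i => map_one _
  have hKmul : ∀ k (g g' : ∀ i, G i j), K k g → K k g' → K k (fun i => g i * g' i) := by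
    intro k g g' hg hg' i
    show hIterM G h i j k (g i * g' i) = 1
    rw [map_mul, hg i, hg' i, mul_one]
  have hKinv : ∀ k (g : ∀ i, G i j), K k g → K k (fun i => (g i)⁻¹) := by
    intro k g hg i
    show hIterM G h i j k (g i)⁻¹ = 1
    rw [map_inv, hg i, inv_one]
  have hKsucc : ∀ k (g : ∀ i, G i j), K k g → K (k + 1) g := by
    intro k g hg i
    have hr : hIterM G h i j (k + 1) (g i) = h i (j + k) (hIterM G h i j k (g i)) := rfl
    rw [hr, hg i, map_one]
  have hKmono : ∀ (k k' : ℕ) (g : ∀ i, G i j), k ≤ k' → K k g → K k' g := by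
    intro k k' g hle hg
    obtain ⟨d, rfl⟩ := Nat.le.dest hle
    clear hle
    induction d with
    | zero => exact hg
    | succ d ih => exact hKsucc (k + d) g ih
  -- basic lemmas about threads
  have hThr1 : Thr (fun _ => 1) := fun i => map_one _
  have hThrMul : ∀ (g g' : ∀ i, G i j), Thr g → Thr g' → Thr (fun i => g i * g' i) := by
    intro g g' hg hg' i
    show p i j (g (i + 1) * g' (i + 1)) = g i * g' i
    rw [map_mul, hg i, hg' i]
  have hThrInv : ∀ (g : ∀ i, G i j), Thr g → Thr (fun i => (g i)⁻¹) := by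
    intro g hg i
    show p i j (g (i + 1))⁻¹ = (g i)⁻¹
    rw [map_inv, hg i]
  have hbelow : ∀ (g : ∀ i, G i j), Thr g → ∀ n, g n = 1 → ∀ i, i ≤ n → g i = 1 := by
    intro g hg
    have haux : ∀ (k i : ℕ), g (i + k) = 1 → g i = 1 := by
      intro k
      induction k with
      | zero => intro i hi; exact hi
      | succ k ih =>
        intro i hi
        apply ih
        have : g (i + k) = p (i + k) j (g (i + k + 1)) := (hg (i + k)).symm
        rw [this, show g (i + k + 1) = g (i + (k+1)) from rfl, hi, map_one]
    intro n hn i hi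
    obtain ⟨k, rfl⟩ := Nat.le.dest hi
    exact haux k i hn
  -- Baire category style dichotomy
  have hdi : ∃ k N, ∀ g : ∀ i, G i j, Thr g → g N = 1 → K k g := by
    by_contra hA
    push_neg at hA
    -- coset refinement
    have hB : ∀ (k N : ℕ) (t : ∀ i, G i j), Thr t →
        ∃ g : ∀ i, G i j, Thr g ∧ g N = 1 ∧ ¬ K k (fun i => t i * g i) := by
      intro k N t ht
      by_contra hno
      push_neg at hno
      obtain ⟨g0, hg0t, hg0N, hg0K⟩ := hA k N
      apply hg0K
      have htK : K k t := by
        have h1 := hno (fun _ => 1) hThr1 rfl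
        have h2 : (fun i => t i * 1) = t := by funext i; rw [mul_one]
        rwa [h2] at h1
      have h3 : K k (fun i => t i * g0 i) := hno g0 hg0t hg0N
      have h4 := hKmul k _ _ (hKinv k t htK) h3
      have h5 : (fun i => (t i)⁻¹ * (t i * g0 i)) = g0 := by
        funext i; group
      rwa [h5] at h4
    -- the diagonal construction
    have hstepB : ∀ (t : ∀ i, G i j), Thr t → ∀ (m N : ℕ),
        ∃ t' : ∀ i, G i j, Thr t' ∧ (∀ i, i ≤ N → t' i = t i) ∧ ¬ K m t' := by
      intro t ht m N
      obtain ⟨g, hg, hgN, hgK⟩ := hB m N t ht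
      refine ⟨fun i => t i * g i, hThrMul t g ht hg, fun i hi => ?_, hgK⟩
      show t i * g i = t i
      rw [hbelow g hg N hgN i hi, mul_one]
    let σ : ℕ → {tn : (∀ i, G i j) × ℕ // Thr tn.1} := fun m => Nat.rec
      ⟨⟨fun _ => 1, 0⟩, hThr1⟩
      (fun m prev =>
        ⟨⟨(hstepB prev.1.1 prev.2 m prev.1.2).choose,
          prev.1.2 + Classical.choose (not_forall.mp
            (hstepB prev.1.1 prev.2 m prev.1.2).choose_spec.2.2) + 1⟩,
         (hstepB prev.1.1 prev.2 m prev.1.2).choose_spec.1⟩) m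
    let tm : ℕ → ∀ i, G i j := fun m => (σ m).1.1
    let Nm : ℕ → ℕ := fun m => (σ m).1.2
    have hthrm : ∀ m, Thr (tm m) := fun m => (σ m).2
    have hagree1 : ∀ m i, i ≤ Nm m → tm (m + 1) i = tm m i :=
      fun m => (hstepB (tm m) (hthrm m) m (Nm m)).choose_spec.2.1
    have hnotK : ∀ m, ¬ K m (tm (m + 1)) :=
      fun m => (hstepB (tm m) (hthrm m) m (Nm m)).choose_spec.2.2
    let iw : ℕ → ℕ := fun m => Classical.choose (not_forall.mp (hnotK m))
    have hiw : ∀ m, ¬ (hIterM G h (iw m) j m (tm (m + 1) (iw m)) = 1) :=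
      fun m => Classical.choose_spec (not_forall.mp (hnotK m))
    have hNsucc : ∀ m, Nm (m + 1) = Nm m + iw m + 1 := fun m => rfl
    have hNmono : ∀ m m', m ≤ m' → Nm m ≤ Nm m' := by
      intro m m' hle
      obtain ⟨d, rfl⟩ := Nat.le.dest hle
      clear hle
      induction d with
      | zero => exact le_rfl
      | succ d ih =>
        have h1 := hNsucc (m + d)
        have h2 : Nm (m + (d + 1)) = Nm (m + d + 1) := rfl
        omega
    have hNge : ∀ m, m ≤ Nm m := by
      intro m
      induction m with
      | zero => exact Nat.zero_le _
      | succ m ih => have := hNsucc m; omega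
    have hagree : ∀ m m', m ≤ m' → ∀ i, i ≤ Nm m → tm m' i = tm m i := by
      intro m m' hle
      obtain ⟨d, rfl⟩ := Nat.le.dest hle
      clear hle
      induction d with
      | zero => intro i _; rfl
      | succ d ih =>
        intro i hi
        have h1 : tm (m + d + 1) i = tm (m + d) i :=
          hagree1 (m + d) i (le_trans hi (hNmono m (m + d) (by omega)))
        rw [show m + (d+1) = m + d + 1 from rfl, h1]
        exact ih i hi
    let tinf : ∀ i, G i j := fun i => tm i i
    have hthrinf : Thr tinf := by
      intro i
      show p i j (tm (i + 1) (i + 1)) = tm i i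
      rw [hthrm (i + 1) i]
      exact hagree i (i + 1) (by omega) i (hNge i)
    have hinfnot : ∀ m, ¬ K m tinf := by
      intro m hKm
      apply hiw m
      have heq : tinf (iw m) = tm (m + 1) (iw m) := by
        rcases le_total (m + 1) (iw m) with hc | hc
        · exact hagree (m + 1) (iw m) hc (iw m) (by have := hNsucc m; omega)
        · exact (hagree (iw m) (m + 1) hc (iw m) (hNge (iw m))).symm
      rw [← heq]
      exact hKm (iw m)
    obtain ⟨k, hk⟩ := htriv j tinf hthrinf
    exact hinfnot k hk
  obtain ⟨k₀, N₀, hk₀⟩ := hdi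
  -- Mittag-Leffler property from vanishing lim¹ (Gray's theorem)
  have hstab : ∀ i₀, ∃ N, ∀ k, (Qs p j i₀ (N + k)).range = (Qs p j i₀ N).range := by
    intro i₀
    haveI : Countable (G (i₀ + 0) j) := fg_countable _
    apply gray
    intro t
    obtain ⟨c, hc⟩ := hlim1 j (fun _ => 1)
      (fun i => if hle : i₀ ≤ i then castG (by omega : i₀ + (i - i₀) = i) (t (i - i₀)) else 1)
    refine ⟨fun n => c (i₀ + n), fun n => ?_⟩
    have h1 := hc (i₀ + n)
    rw [mul_one] at h1
    have h2 : (if hle : i₀ ≤ i₀ + n then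
        castG (by omega : i₀ + (i₀ + n - i₀) = i₀ + n) (t (i₀ + n - i₀)) else 1) = t n := by
      rw [dif_pos (Nat.le_add_right i₀ n)]
      exact castG_pi_shift t (by omega) _
    exact h1.trans h2
  let Nst : ℕ → ℕ := fun i => (hstab i).choose
  have hNst : ∀ i k, (Qs p j i (Nst i + k)).range = (Qs p j i (Nst i)).range :=
    fun i => (hstab i).choose_spec
  have hstabAll : ∀ i (x : G i j), x ∈ (Qs p j i (Nst i)).range → ∀ n, x ∈ (Qs p j i n).range := by
    intro i x hx n
    have h1 : (Qs p j i (Nst i + n)).range ≤ (Qs p j i n).range :=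
      QT_range_le _ _ (by omega)
    rw [hNst i n] at h1
    exact h1 hx
  have hup : ∀ (m : ℕ) (y : G m j), (∀ n, y ∈ (Qs p j m n).range) →
      ∃ y' : G (m + 1) j, p m j y' = y ∧ ∀ n, y' ∈ (Qs p j (m + 1) n).range := by
    intro m y hy
    obtain ⟨z, hz⟩ := hy (Nst (m + 1) + 1)
    have e : m + (Nst (m + 1) + 1) = (m + 1) + Nst (m + 1) := by omega
    refine ⟨Qs p j (m + 1) (Nst (m + 1)) (castG e z), ?_, ?_⟩
    · rw [Qs_cross p m (Nst (m + 1)) (by omega) (castG e z)]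
      rw [castG_trans]
      rw [castG_id]
      exact hz
    · exact hstabAll (m + 1) _ ⟨castG e z, rfl⟩
  have hthread : ∀ (N : ℕ) (x : G N j), (∀ n, x ∈ (Qs p j N n).range) →
      ∃ g : ∀ i, G i j, Thr g ∧ g N = x := by
    intro N x hx
    let F : ∀ k, {y : G (N + k) j // ∀ n, y ∈ (Qs p j (N + k) n).range} := fun k => Nat.rec
      ⟨x, hx⟩
      (fun k ih => ⟨(hup (N + k) ih.1 ih.2).choose, (hup (N + k) ih.1 ih.2).choose_spec.2⟩) k
    have hF : ∀ k, p (N + k) j ((F (k + 1)).1) = (F k).1 :=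
      fun k => (hup (N + k) (F k).1 (F k).2).choose_spec.1
    let g : ∀ i, G i j := fun i =>
      if hle : N ≤ i then castG (by omega : N + (i - N) = i) (F (i - N)).1
      else Qs p j i (N - i) (castG (by omega : N = i + (N - i)) x)
    have hgup : ∀ k, g (N + k) = (F k).1 := by
      intro k
      show (if hle : N ≤ N + k then _ else _) = _
      rw [dif_pos (Nat.le_add_right N k)]
      exact castG_pi_shift (fun k => (F k).1) (by omega : N + k - N = k) _
    refine ⟨g, ?_, ?_⟩
    · -- thread property
      intro i
      by_cases h1 : N ≤ i
      · obtain ⟨k, rfl⟩ := Nat.le.dest h1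
        have e1 : g (N + k + 1) = (F (k + 1)).1 := hgup (k + 1)
        rw [e1, hgup k]
        exact hF k
      · have h1' : i < N := by omega
        by_cases h2 : N ≤ i + 1
        · have hN : N = i + 1 := by omega
          have e1 : g (i + 1) = castG hN x := by
            show (if hle : N ≤ i + 1 then _ else _) = _
            rw [dif_pos h2]
            exact castG_pi_shift2 (fun k => (F k).1) (by omega : i + 1 - N = 0) _
              (by omega : N + 0 = i + 1)
          have e2 : g i = Qs p j i (N - i) (castG (by omega : N = i + (N - i)) x) := by
            show (if hle : N ≤ i then _ else _) = _
            rw [dif_neg h1]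
          rw [e1, e2]
          have hab : (1 : ℕ) = N - i := by omega
          have e3 : i + 1 = i + (N - i) := by omega
          have h4 : Qs p j i (N - i) (castG e3 (castG hN x)) = Qs p j i 1 (castG hN x) :=
            Qs_congr_arg p hab e3 (castG hN x)
          have h5 : castG e3 (castG hN x) =
              castG (by omega : N = i + (N - i)) x := castG_trans hN e3 x
          rw [← h5, h4]
          rfl
        · have h2' : i + 1 < N := by omega
          have e1 : g (i + 1) = Qs p j (i + 1) (N - (i + 1))
              (castG (by omega : N = (i + 1) + (N - (i + 1))) x) := by
            show (if hle : N ≤ i + 1 then _ else _) = _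
            rw [dif_neg h2]
          have e2 : g i = Qs p j i (N - i) (castG (by omega : N = i + (N - i)) x) := by
            show (if hle : N ≤ i then _ else _) = _
            rw [dif_neg h1]
          rw [e1, e2]
          have ec : i + 1 + (N - (i + 1)) = i + (N - (i + 1) + 1) := by omega
          rw [Qs_cross p i (N - (i + 1)) ec _]
          rw [castG_trans]
          have hab : N - (i + 1) + 1 = N - i := by omega
          have e3 : i + (N - (i + 1) + 1) = i + (N - i) := by omega
          have h4 := Qs_congr_arg p hab e3
            (castG ((by omega : N = (i + 1) + (N - (i + 1))).trans ec) x)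
          rw [← h4, castG_trans]
    · -- g N = x
      exact hgup 0
  -- final assembly
  obtain ⟨S, hS, hSfin⟩ := Group.fg_iff.mp (inferInstance : Group.FG (G (N₀ + Nst N₀) j))
  have hMgen : (Qs p j N₀ (Nst N₀)).range =
      Subgroup.closure ((Qs p j N₀ (Nst N₀)) '' S) := by
    rw [MonoidHom.range_eq_map, ← hS, MonoidHom.map_closure]
  have hgenthr : ∀ s : G (N₀ + Nst N₀) j, ∃ gk : (∀ i, G i j) × ℕ,
      Thr gk.1 ∧ K gk.2 gk.1 ∧ gk.1 N₀ = Qs p j N₀ (Nst N₀) s := by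
    intro s
    have hmem : ∀ n, Qs p j N₀ (Nst N₀) s ∈ (Qs p j N₀ n).range :=
      hstabAll N₀ _ ⟨s, rfl⟩
    obtain ⟨g, hgthr, hgN⟩ := hthread N₀ _ hmem
    obtain ⟨k, hk⟩ := htriv j g hgthr
    exact ⟨(g, k), hgthr, hk, hgN⟩
  choose gk hthr1 hK2 hN3 using hgenthr
  let kf : ℕ := max k₀ (hSfin.toFinset.sup fun s => (gk s).2)
  have hkfk₀ : k₀ ≤ kf := le_max_left _ _
  have hkfs : ∀ s ∈ S, (gk s).2 ≤ kf := by
    intro s hs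
    have h7 : (gk s).2 ≤ hSfin.toFinset.sup fun s => (gk s).2 :=
      Finset.le_sup (f := fun s => (gk s).2) (hSfin.mem_toFinset.mpr hs)
    exact le_trans h7 (le_max_right _ _)
  let E : Subgroup (G N₀ j) :=
    { carrier := {y | ∃ g : ∀ i, G i j, Thr g ∧ K kf g ∧ g N₀ = y}
      mul_mem' := by
        rintro a b ⟨ga, hga1, hga2, rfl⟩ ⟨gb, hgb1, hgb2, rfl⟩
        exact ⟨fun i => ga i * gb i, hThrMul _ _ hga1 hgb1, hKmul _ _ _ hga2 hgb2, rfl⟩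
      one_mem' := ⟨fun _ => 1, hThr1, hK1 kf, rfl⟩
      inv_mem' := by
        rintro a ⟨ga, h1, h2, rfl⟩
        exact ⟨fun i => (ga i)⁻¹, hThrInv _ h1, hKinv _ _ h2, rfl⟩ }
  have hle : (Qs p j N₀ (Nst N₀)).range ≤ E := by
    rw [hMgen]
    refine (Subgroup.closure_le E).mpr ?_
    rintro y ⟨s, hs, rfl⟩
    exact ⟨(gk s).1, hthr1 s, hKmono _ _ _ (hkfs s hs) (hK2 s), hN3 s⟩
  refine ⟨kf + 1, Nat.succ_pos _, ?_⟩
  intro g hgthr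
  have hgN : g N₀ ∈ (Qs p j N₀ (Nst N₀)).range :=
    ⟨g (N₀ + Nst N₀), Qs_thread p hgthr N₀ (Nst N₀)⟩
  obtain ⟨g', h'1, h'2, h'3⟩ := hle hgN
  have hu : Thr (fun i => g i * (g' i)⁻¹) :=
    hThrMul g (fun i => (g' i)⁻¹) hgthr (hThrInv g' h'1)
  have huN : g N₀ * (g' N₀)⁻¹ = 1 := by rw [h'3]; group
  have hKu : K k₀ (fun i => g i * (g' i)⁻¹) := hk₀ _ hu huN
  have hKu' : K kf (fun i => g i * (g' i)⁻¹) := hKmono _ _ _ hkfk₀ hKu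
  have hKg : K kf g := by
    have h6 := hKmul kf (fun i => g i * (g' i)⁻¹) g' hKu' h'2
    have heq : (fun i => (g i * (g' i)⁻¹) * g' i) = g := by funext i; group
    rwa [heq] at h6
  exact hKsucc kf g hKg
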